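/- Asymptotic limit of a contraction: let H be a complex Hilbert space and A a bounded operator on H with ‖A‖ ≤ 1. Then: (i) there exists a bounded self-adjoint operator Δ on H with 0 ≤ Δ ≤ I_H such that ‖A^n A^{*n} x − Δ x‖ → 0 as n → ∞ for every x ∈ H (Δ is the strong limit of the nonincreasing sequence of positive operators A^n A^{*n}); (ii) the fundamental identity A Δ A^* = Δ holds; (iii) for every x ∈ H, ⟨A^n (I − Δ) A^{*n} x, x⟩ → 0 as n → ∞; equivalently, ‖(I − Δ)^{1/2} A^{*n} x‖ → 0, where (I − Δ)^{1/2} denotes the positive square root of I − Δ. -/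

import Mathlib

/-!
The operators `Tₙ = Aⁿ A*ⁿ` are positive and, since `A A* ≤ 1`, they decrease in the Loewner
order. A decreasing sequence of positive operators converges strongly (Vigier): the quadratic
forms `⟪Tₙ x, x⟫` decrease to a limit, and for a positive `S` one has
`‖S x‖² ≤ ‖S‖ ⟪S x, x⟫`, so `‖Tₙ x - Tₘ x‖² ≤ ‖T₀‖ (⟪Tₙ x, x⟫ - ⟪Tₘ x, x⟫)` and `Tₙ x` is Cauchy.
The limit `Δ` satisfies `A Δ A* = Δ` because `A Tₙ A* = Tₙ₊₁`; iterating gives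
`Aⁿ (1 - Δ) A*ⁿ = Tₙ - Δ → 0` strongly, and `‖R A*ⁿ x‖² = ⟪Aⁿ (1 - Δ) A*ⁿ x, x⟫` when `R² = 1 - Δ`.
-/

open ContinuousLinearMap Filter Topology

theorem pow_mul_mul_pow_eq_of_mul_mul_eq {M : Type*} [Monoid M] {a b d : M} (h : a * d * b = d)
    (n : ℕ) : a ^ n * d * b ^ n = d := by
  induction n with
  | zero => simp
  | succ n ih =>
    calc a ^ (n + 1) * d * b ^ (n + 1) = a ^ n * (a * d * b) * b ^ n := by
          rw [pow_succ a, pow_succ' b]; simp only [mul_assoc]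
      _ = d := by rw [h, ih]

namespace CStarAlgebra

variable {A : Type*} [CStarAlgebra A] [PartialOrder A] [StarOrderedRing A]

theorem mul_star_le_one_of_norm_le_one {a : A} (ha : ‖a‖ ≤ 1) : a * star a ≤ 1 :=
  (norm_le_one_iff_of_nonneg _ (mul_star_self_nonneg a)).1 <| by
    rw [CStarRing.norm_self_mul_star]; exact mul_le_one₀ ha (norm_nonneg a) ha

theorem antitone_pow_mul_star_pow {a : A} (ha : ‖a‖ ≤ 1) :
    Antitone fun n : ℕ => a ^ n * star (a ^ n) := by
  refine antitone_nat_of_succ_le fun n => ?_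
  calc a ^ (n + 1) * star (a ^ (n + 1)) = a ^ n * (a * star a) * star (a ^ n) := by
        rw [pow_succ, star_mul, mul_assoc, mul_assoc, mul_assoc]
    _ ≤ a ^ n * 1 * star (a ^ n) :=
        star_right_conjugate_le_conjugate (mul_star_le_one_of_norm_le_one ha) _
    _ = a ^ n * star (a ^ n) := by rw [mul_one]

end CStarAlgebra

namespace ContinuousLinearMap

theorem isPositive_of_tendsto {𝕜 E ι : Type*} [RCLike 𝕜] [NormedAddCommGroup E]
    [InnerProductSpace 𝕜 E] {l : Filter ι} [l.NeBot] {S : ι → E →L[𝕜] E} {T : E →L[𝕜] E}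
    (hS : ∀ᶠ i in l, (S i).IsPositive) (hT : ∀ x, Tendsto (fun i => S i x) l (𝓝 (T x))) :
    T.IsPositive := by
  refine ⟨fun x y => ?_, fun x => ?_⟩
  · refine tendsto_nhds_unique ((hT x).inner tendsto_const_nhds) ?_
    refine (tendsto_const_nhds.inner (hT y)).congr' ?_
    filter_upwards [hS] with i hi using (hi.inner_left_eq_inner_right x y).symm
  · refine ge_of_tendsto ((RCLike.continuous_re.tendsto _).comp
      ((hT x).inner tendsto_const_nhds)) ?_
    filter_upwards [hS] with i hi using hi.re_inner_nonneg_left x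

variable {H : Type*} [NormedAddCommGroup H] [InnerProductSpace ℂ H] [CompleteSpace H]

theorem apply_norm_sq_le_of_nonneg {S : H →L[ℂ] H} (hS : 0 ≤ S) (x : H) :
    ‖S x‖ ^ 2 ≤ ‖S‖ * RCLike.re (inner ℂ (S x) x) := by
  set s := CFC.sqrt S
  have hs : IsSelfAdjoint s := .of_nonneg (CFC.sqrt_nonneg S)
  have hss : s * s = S := CFC.sqrt_mul_sqrt_self S hS
  have hnorm : ‖s‖ * ‖s‖ = ‖S‖ := by
    rw [← hss, ← CStarRing.norm_star_mul_self, hs.star_eq]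
  have hinner : ‖s x‖ ^ 2 = RCLike.re (inner ℂ (S x) x) := by
    rw [apply_norm_sq_eq_inner_adjoint_left, ← star_eq_adjoint, hs.star_eq, ← hss]; rfl
  calc ‖S x‖ ^ 2 = ‖s (s x)‖ ^ 2 := by rw [← hss]; rfl
    _ ≤ (‖s‖ * ‖s x‖) ^ 2 := by gcongr; exact le_opNorm s (s x)
    _ = ‖S‖ * RCLike.re (inner ℂ (S x) x) := by rw [mul_pow, sq ‖s‖, hnorm, hinner]

theorem cauchySeq_apply_of_antitone {T : ℕ → H →L[ℂ] H} (hT : Antitone T) (hT0 : ∀ n, 0 ≤ T n)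
    (x : H) : CauchySeq fun n => T n x := by
  set q : ℕ → ℝ := fun n => RCLike.re (inner ℂ (T n x) x)
  have hq : Antitone q := fun n m hnm => by
    simpa [q, inner_sub_left] using ((le_def _ _).1 (hT hnm)).re_inner_nonneg_left x
  have hq_lim : Tendsto q atTop (𝓝 (⨅ n, q n)) :=
    tendsto_atTop_ciInf hq ⟨0, by
      rintro _ ⟨n, rfl⟩; exact ((nonneg_iff_isPositive _).1 (hT0 n)).re_inner_nonneg_left x⟩
  refine cauchySeq_of_le_tendsto_0' (fun n => √(‖T 0‖ * (q n - ⨅ n, q n))) (fun n m hnm => ?_) ?_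
  · have hdiff : 0 ≤ T n - T m := sub_nonneg.2 (hT hnm)
    have hnorm : ‖T n - T m‖ ≤ ‖T 0‖ :=
      CStarAlgebra.norm_le_norm_of_nonneg_of_le hdiff
        ((sub_le_self _ (hT0 m)).trans (hT (Nat.zero_le n)))
    refine Real.le_sqrt_of_sq_le ?_
    calc dist (T n x) (T m x) ^ 2 = ‖(T n - T m) x‖ ^ 2 := by rw [dist_eq_norm, sub_apply]
      _ ≤ ‖T n - T m‖ * (q n - q m) := by
        simpa [q, inner_sub_left] using apply_norm_sq_le_of_nonneg hdiff x
      _ ≤ ‖T 0‖ * (q n - ⨅ n, q n) := by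
        gcongr
        · exact sub_nonneg.2 (hq hnm)
        · exact hq.le_of_tendsto hq_lim m
  · simpa using ((hq_lim.sub_const (⨅ n, q n)).const_mul ‖T 0‖).sqrt

theorem exists_tendsto_apply_of_antitone {T : ℕ → H →L[ℂ] H} (hT : Antitone T)
    (hT0 : ∀ n, 0 ≤ T n) :
    ∃ Δ : H →L[ℂ] H, 0 ≤ Δ ∧ (∀ n, Δ ≤ T n) ∧ ∀ x, Tendsto (fun n => T n x) atTop (𝓝 (Δ x)) := by
  choose f hf using fun x => cauchySeq_tendsto_of_complete (cauchySeq_apply_of_antitone hT hT0 x)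
  set Δ := continuousLinearMapOfTendsto T (tendsto_pi_nhds.2 hf)
  have hΔ : ∀ x, Tendsto (fun n => T n x) atTop (𝓝 (Δ x)) := hf
  refine ⟨Δ, ?_, fun n => ?_, hΔ⟩
  · exact (nonneg_iff_isPositive _).2 <|
      isPositive_of_tendsto (.of_forall fun n => (nonneg_iff_isPositive _).1 (hT0 n)) hΔ
  · refine isPositive_of_tendsto (S := fun m => T n - T m) ?_ fun x => (hΔ x).const_sub (T n x)
    filter_upwards [eventually_ge_atTop n] with m hm using hT hm

end ContinuousLinearMap

theorem asymptotic_limit_of_contraction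
    {H : Type*} [NormedAddCommGroup H] [InnerProductSpace ℂ H] [CompleteSpace H]
    (A : H →L[ℂ] H) (hA : ‖A‖ ≤ 1) :
    ∃ Δ : H →L[ℂ] H,
      Δ.IsPositive ∧ ((1 : H →L[ℂ] H) - Δ).IsPositive ∧
      (∀ x : H,
        Tendsto (fun n : ℕ => ‖(A ^ n * adjoint A ^ n) x - Δ x‖) atTop (nhds 0)) ∧
      A * Δ * adjoint A = Δ ∧
      (∀ x : H,
        Tendsto (fun n : ℕ =>
            (inner ℂ ((A ^ n * ((1 : H →L[ℂ] H) - Δ) * adjoint A ^ n) x) x : ℂ))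
          atTop (nhds 0)) ∧
      ∀ R : H →L[ℂ] H, R.IsPositive → R * R = 1 - Δ →
        ∀ x : H, Tendsto (fun n : ℕ => ‖R ((adjoint A ^ n) x)‖) atTop (nhds 0) := by
  have hpow : ∀ n : ℕ, star (A ^ n) = adjoint A ^ n := fun n => by rw [star_pow, star_eq_adjoint]
  obtain ⟨Δ, hΔ, hΔ_le, hlim⟩ := exists_tendsto_apply_of_antitone
    (CStarAlgebra.antitone_pow_mul_star_pow hA) fun n => mul_star_self_nonneg (A ^ n)
  simp only [hpow] at hΔ_le hlim
  have hfix : A * Δ * adjoint A = Δ := by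
    ext x
    refine tendsto_nhds_unique ((A.continuous.tendsto _).comp (hlim (adjoint A x))) ?_
    refine ((hlim x).comp (tendsto_add_atTop_nat 1)).congr fun n => ?_
    rw [Function.comp_apply, pow_succ' A, pow_succ (adjoint A)]
    rfl
  have hconj : ∀ n : ℕ, A ^ n * (1 - Δ) * adjoint A ^ n = A ^ n * adjoint A ^ n - Δ := fun n => by
    rw [mul_sub, mul_one, sub_mul, pow_mul_mul_pow_eq_of_mul_mul_eq hfix]
  have hinner : ∀ x, Tendsto (fun n : ℕ => inner ℂ ((A ^ n * (1 - Δ) * adjoint A ^ n) x) x)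
      atTop (𝓝 0) := fun x => by
    simp only [hconj, sub_apply, inner_sub_left]
    simpa only [sub_self] using
      ((hlim x).inner (tendsto_const_nhds (x := x))).sub_const (inner ℂ (Δ x) x)
  refine ⟨Δ, (nonneg_iff_isPositive _).1 hΔ, (le_def _ _).1 (by simpa using hΔ_le 0),
    fun x => tendsto_iff_norm_sub_tendsto_zero.1 (hlim x), hfix, hinner, fun R hR hRR x => ?_⟩
  have hnorm : ∀ n : ℕ, ‖R ((adjoint A ^ n) x)‖
      = √(RCLike.re (inner ℂ ((A ^ n * (1 - Δ) * adjoint A ^ n) x) x)) := fun n => by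
    rw [apply_norm_eq_sqrt_inner_adjoint_left, ← star_eq_adjoint, hR.isSelfAdjoint.star_eq,
      ← mul_def, hRR, ← hpow, star_eq_adjoint, adjoint_inner_right]
    rfl
  simpa only [hnorm, Function.comp_def, map_zero, Real.sqrt_zero] using
    ((RCLike.continuous_re.tendsto 0).comp (hinner x)).sqrt
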